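/- arXiv:2410.20548 — 10 statements merged into one kernel-verified Lean document; each statement's English description precedes it below -/
import Mathlib

section
/- Let V be a real inner product space with inner product ⟪·,·⟫ and let g be a symmetric bilinear form on V. Let H ≥ 0 and H₀ ≥ 0 be real numbers such that H²·g(x,x) ≥ H₀²·⟪x,x⟫ for all x ∈ V. Let τ, ν ∈ V satisfy g(τ,τ) = g(ν,ν) = 1 and g(τ,ν) = 0, and let τ̄, ν̄ ∈ V be orthonormal for ⟪·,·⟫. Then for all real numbers a, b not both zero, H ≥ (H₀/(a² + b²))·⟪a·τ + b·ν, a·τ̄ + b·ν̄⟫. -/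
/-!
With `x = a • τ + b • ν` and `y = a • τb + b • νb`, orthonormality gives
`g x x = ⟪y, y⟫ = a ^ 2 + b ^ 2`, so the comparison hypothesis at `x` reads
`|H₀| ‖x‖ ≤ H ‖y‖`, and Cauchy–Schwarz bounds `H₀ ⟪x, y⟫` by `H ‖y‖ ^ 2 = H (a ^ 2 + b ^ 2)`.
-/

open RealInnerProductSpace

namespace LinearMap.BilinForm

theorem apply_smul_add_smul_self_of_orthonormal {R M : Type*} [CommRing R] [AddCommGroup M]
    [Module R M] (B : LinearMap.BilinForm R M) {u v : M} (huu : B u u = 1) (hvv : B v v = 1)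
    (huv : B u v = 0) (hvu : B v u = 0) (a b : R) :
    B (a • u + b • v) (a • u + b • v) = a ^ 2 + b ^ 2 := by
  simp only [map_add, map_smul, LinearMap.add_apply, LinearMap.smul_apply, smul_eq_mul,
    huu, hvv, huv, hvu]
  ring

end LinearMap.BilinForm

theorem real_inner_smul_add_smul_self_of_orthonormal {V : Type*} [NormedAddCommGroup V]
    [InnerProductSpace ℝ V] {u v : V} (huu : ⟪u, u⟫ = 1) (hvv : ⟪v, v⟫ = 1) (huv : ⟪u, v⟫ = 0)
    (a b : ℝ) : ⟪a • u + b • v, a • u + b • v⟫ = a ^ 2 + b ^ 2 :=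
  LinearMap.BilinForm.apply_smul_add_smul_self_of_orthonormal (innerₗ V) huu hvv huv
    (by rwa [innerₗ_apply_apply, real_inner_comm]) a b

theorem mul_real_inner_le_mul_norm_sq {V : Type*} [NormedAddCommGroup V] [InnerProductSpace ℝ V]
    {H H₀ : ℝ} (hH : 0 ≤ H) {x y : V} (h : H₀ ^ 2 * ‖x‖ ^ 2 ≤ H ^ 2 * ‖y‖ ^ 2) :
    H₀ * ⟪x, y⟫ ≤ H * ‖y‖ ^ 2 := by
  have hxy : |H₀ * ‖x‖| ≤ H * ‖y‖ := by
    apply abs_le_of_sq_le_sq _ (by positivity)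
    simpa only [mul_pow] using h
  calc H₀ * ⟪x, y⟫ ≤ |H₀ * ⟪x, y⟫| := le_abs_self _
    _ ≤ |H₀| * (‖x‖ * ‖y‖) := by
      rw [abs_mul]
      exact mul_le_mul_of_nonneg_left (abs_real_inner_le_norm x y) (abs_nonneg _)
    _ = |H₀ * ‖x‖| * ‖y‖ := by rw [abs_mul, abs_norm, mul_assoc]
    _ ≤ H * ‖y‖ * ‖y‖ := mul_le_mul_of_nonneg_right hxy (norm_nonneg y)
    _ = H * ‖y‖ ^ 2 := by ring

theorem mean_curvature_comparison_general
    {V : Type*} [NormedAddCommGroup V] [InnerProductSpace ℝ V]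
    (g : LinearMap.BilinForm ℝ V) (hg : ∀ x y : V, g x y = g y x)
    (H H₀ : ℝ) (hH : 0 ≤ H)
    (hcomp : ∀ x : V, H₀ ^ 2 * ⟪x, x⟫ ≤ H ^ 2 * g x x)
    (τ ν : V) (hττ : g τ τ = 1) (hνν : g ν ν = 1) (hτν : g τ ν = 0)
    (τb νb : V) (hτbτb : ⟪τb, τb⟫ = 1) (hνbνb : ⟪νb, νb⟫ = 1)
    (hτbνb : ⟪τb, νb⟫ = 0)
    (a b : ℝ) :
    H₀ / (a ^ 2 + b ^ 2) * ⟪a • τ + b • ν, a • τb + b • νb⟫ ≤ H := by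
  set x := a • τ + b • ν
  set y := a • τb + b • νb
  have hgx : g x x = a ^ 2 + b ^ 2 :=
    g.apply_smul_add_smul_self_of_orthonormal hττ hνν hτν (by rwa [hg]) a b
  have hy : ‖y‖ ^ 2 = a ^ 2 + b ^ 2 := by
    rw [← real_inner_self_eq_norm_sq]
    exact real_inner_smul_add_smul_self_of_orthonormal hτbτb hνbνb hτbνb a b
  have hxy : H₀ * ⟪x, y⟫ ≤ H * (a ^ 2 + b ^ 2) := by
    rw [← hy]
    apply mul_real_inner_le_mul_norm_sq hH
    simpa only [real_inner_self_eq_norm_sq, hgx, hy] using hcomp x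
  rw [div_mul_eq_mul_div]
  exact div_le_of_le_mul₀ (by positivity) hH hxy

/-- Lemma 3.1: pointwise mean curvature comparison at a boundary point.
The inner product `⟪·,·⟫` models the Euclidean metric, `g` the Riemannian metric at `p`. -/
theorem mean_curvature_comparison
    {V : Type*} [NormedAddCommGroup V] [InnerProductSpace ℝ V]
    (g : LinearMap.BilinForm ℝ V) (hg : ∀ x y : V, g x y = g y x)
    (H H₀ : ℝ) (hH : 0 ≤ H) (hH₀ : 0 ≤ H₀)
    (hcomp : ∀ x : V, H₀ ^ 2 * ⟪x, x⟫ ≤ H ^ 2 * g x x)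
    (τ ν : V) (hττ : g τ τ = 1) (hνν : g ν ν = 1) (hτν : g τ ν = 0)
    (τb νb : V) (hτbτb : ⟪τb, τb⟫ = 1) (hνbνb : ⟪νb, νb⟫ = 1)
    (hτbνb : ⟪τb, νb⟫ = 0)
    (a b : ℝ) (hab : ¬ (a = 0 ∧ b = 0)) :
    H₀ / (a ^ 2 + b ^ 2) * ⟪a • τ + b • ν, a • τb + b • νb⟫ ≤ H :=
  mean_curvature_comparison_general g hg H H₀ hH hcomp τ ν hττ hνν hτν τb νb hτbτb hνbνb hτbνb a b
end

section
/- Let V be a real inner product space with inner product ⟪·,·⟫ and let g be a symmetric bilinear form on V. Let H ≥ 0 and H₀ > 0 be real numbers such that H²·g(x,x) ≥ H₀²·⟪x,x⟫ for all x ∈ V. Let τ, ν ∈ V satisfy g(τ,τ) = g(ν,ν) = 1 and g(τ,ν) = 0, and let τ̄, ν̄ ∈ V be orthonormal for ⟪·,·⟫. Let A, B be real numbers with H₀ − B > 0 and (H₀ − B)·B − A² ≥ 0, and set W₁ = (A² + (H₀ − B)²)/(H₀·(H₀ − B)) and W₂ = ((H₀ − B)·B − A²)/(H₀·(H₀ −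 B)). Then W₁ ≥ 0, W₂ ≥ 0, W₁ + W₂ = 1, and H ≥ W₁·(H₀/((H₀ − B)² + A²))·⟪(H₀ − B)·τ + A·ν, (H₀ − B)·τ̄ + A·ν̄⟫ + W₂·H₀·⟪ν, ν̄⟫. -/
/-!
Both vectors `(H₀ - B) τ + A ν` and `ν` have `g`-length equal to the Euclidean length of their
barred counterparts, so Cauchy–Schwarz for `⟪·,·⟫` together with `H₀² ⟪x, x⟫ ≤ H² g(x, x)` bounds
each of the two terms by `H`; the weights `W₁, W₂` are convex because `(H₀ - B) B - A² ≥ 0`.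
-/

open RealInnerProductSpace

namespace LinearMap.BilinForm

variable {V : Type*} [AddCommGroup V] [Module ℝ V]

theorem apply_smul_add_smul_self (g : LinearMap.BilinForm ℝ V) {x y : V}
    (hxx : g x x = 1) (hyy : g y y = 1) (hxy : g x y = 0) (hyx : g y x = 0) (a b : ℝ) :
    g (a • x + b • y) (a • x + b • y) = a ^ 2 + b ^ 2 := by
  simp only [map_add, map_smul, LinearMap.add_apply, LinearMap.smul_apply, smul_eq_mul,
    hxx, hyy, hxy, hyx]
  ring

end LinearMap.BilinForm

section

variable {V : Type*} [NormedAddCommGroup V] [InnerProductSpace ℝ V]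

theorem real_inner_smul_add_smul_self {x y : V} (hxx : ⟪x, x⟫ = 1) (hyy : ⟪y, y⟫ = 1)
    (hxy : ⟪x, y⟫ = 0) (a b : ℝ) :
    ⟪a • x + b • y, a • x + b • y⟫ = a ^ 2 + b ^ 2 :=
  LinearMap.BilinForm.apply_smul_add_smul_self (innerₗ V) hxx hyy hxy
    (by rwa [innerₗ_apply_apply, real_inner_comm]) a b

theorem mul_real_inner_le_of_sq_mul_inner_le (g : LinearMap.BilinForm ℝ V) {H H₀ : ℝ}
    (hH : 0 ≤ H) (hcomp : ∀ x : V, H₀ ^ 2 * ⟪x, x⟫ ≤ H ^ 2 * g x x)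
    {S : ℝ} {u v : V} (hu : g u u = S) (hv : ⟪v, v⟫ = S) :
    H₀ * ⟪u, v⟫ ≤ H * S := by
  rw [real_inner_self_eq_norm_sq] at hv
  have hsq : (H₀ * ‖u‖) ^ 2 ≤ (H * ‖v‖) ^ 2 := by
    simpa only [mul_pow, ← real_inner_self_eq_norm_sq, hu, hv] using hcomp u
  have habs : |H₀| * ‖u‖ ≤ H * ‖v‖ := by
    simpa only [abs_mul, abs_norm, abs_of_nonneg hH] using sq_le_sq.mp hsq
  calc H₀ * ⟪u, v⟫ ≤ |H₀| * (‖u‖ * ‖v‖) :=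
        (le_abs_self _).trans ((abs_mul _ _).trans_le
          (mul_le_mul_of_nonneg_left (abs_real_inner_le_norm u v) (abs_nonneg _)))
    _ ≤ H * ‖v‖ * ‖v‖ := by
        rw [← mul_assoc]; exact mul_le_mul_of_nonneg_right habs (norm_nonneg v)
    _ = H * S := by rw [← hv]; ring

end

/-- The weighted intermediate inequality (3.11) in the proof of Lemma 3.2,
obtained by combining two instances of Lemma 3.1 with convex weights `W₁, W₂`. -/
theorem weighted_mean_curvature_comparison
    {V : Type*} [NormedAddCommGroup V] [InnerProductSpace ℝ V]
    (g : LinearMap.BilinForm ℝ V) (hg : ∀ x y : V, g x y = g y x)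
    (H H₀ : ℝ) (hH : 0 ≤ H) (hH₀ : 0 < H₀)
    (hcomp : ∀ x : V, H₀ ^ 2 * ⟪x, x⟫ ≤ H ^ 2 * g x x)
    (τ ν : V) (hττ : g τ τ = 1) (hνν : g ν ν = 1) (hτν : g τ ν = 0)
    (τb νb : V) (hτbτb : ⟪τb, τb⟫ = 1) (hνbνb : ⟪νb, νb⟫ = 1)
    (hτbνb : ⟪τb, νb⟫ = 0)
    (A B : ℝ) (hB : 0 < H₀ - B) (hwc : 0 ≤ (H₀ - B) * B - A ^ 2)
    (W₁ W₂ : ℝ)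
    (hW₁ : W₁ = (A ^ 2 + (H₀ - B) ^ 2) / (H₀ * (H₀ - B)))
    (hW₂ : W₂ = ((H₀ - B) * B - A ^ 2) / (H₀ * (H₀ - B))) :
    0 ≤ W₁ ∧ 0 ≤ W₂ ∧ W₁ + W₂ = 1 ∧
      W₁ * (H₀ / ((H₀ - B) ^ 2 + A ^ 2)) *
          ⟪(H₀ - B) • τ + A • ν, (H₀ - B) • τb + A • νb⟫
        + W₂ * H₀ * ⟪ν, νb⟫ ≤ H := by
  have hden : 0 < H₀ * (H₀ - B) := mul_pos hH₀ hB
  have hW₁_nonneg : 0 ≤ W₁ := by rw [hW₁]; positivity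
  have hW₂_nonneg : 0 ≤ W₂ := by rw [hW₂]; exact div_nonneg hwc hden.le
  have hsum : W₁ + W₂ = 1 := by
    rw [hW₁, hW₂, ← add_div, div_eq_one_iff_eq hden.ne']; ring
  refine ⟨hW₁_nonneg, hW₂_nonneg, hsum, ?_⟩
  have hS : 0 < (H₀ - B) ^ 2 + A ^ 2 := by positivity
  have hfirst : H₀ / ((H₀ - B) ^ 2 + A ^ 2) *
      ⟪(H₀ - B) • τ + A • ν, (H₀ - B) • τb + A • νb⟫ ≤ H := by
    rw [div_mul_eq_mul_div, div_le_iff₀ hS]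
    exact mul_real_inner_le_of_sq_mul_inner_le g hH hcomp
      (g.apply_smul_add_smul_self hττ hνν hτν (by rw [hg, hτν]) _ _)
      (real_inner_smul_add_smul_self hτbτb hνbνb hτbνb _ _)
  have hsecond : H₀ * ⟪ν, νb⟫ ≤ H := by
    simpa only [mul_one] using mul_real_inner_le_of_sq_mul_inner_le g hH hcomp hνν hνbνb
  calc _ ≤ W₁ * H + W₂ * H := by
        linarith [mul_le_mul_of_nonneg_left hfirst hW₁_nonneg,
          mul_le_mul_of_nonneg_left hsecond hW₂_nonneg]
    _ = H := by rw [← add_mul, hsum, one_mul]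
end

section
/- Let V be a real inner product space with inner product ⟪·,·⟫ and let g be a symmetric bilinear form on V. Let H ≥ 0 and H₀ ≥ 0 be real numbers such that H²·g(x,x) ≥ H₀²·⟪x,x⟫ for all x ∈ V. Let τ, ν ∈ V satisfy g(τ,τ) = g(ν,ν) = 1 and g(τ,ν) = 0, and let τ̄, ν̄ ∈ V be orthonormal for ⟪·,·⟫. Let A, B be real numbers with (H₀ − B)·B − A² ≥ 0. Then H − (A·⟪ν, τ̄⟫ + B·⟪ν, ν̄⟫) ≥ A·⟪τ, ν̄⟫ + (H₀ − B)·⟪τ, τ̄⟫. -/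
open RealInnerProductSpace

set_option maxHeartbeats 1000000 in
/-- Lemma 3.2: the local comparison estimate of the boundary term at a point of `∂Σ ⊂ ∂M`.
Here `A = ∇_τ̄ ρ̄` and `B = ∇_ν̄ ρ̄`, so the left-hand side is `H − ∇_ν ρ̄`. -/
theorem boundary_term_lower_bound
    {V : Type*} [NormedAddCommGroup V] [InnerProductSpace ℝ V]
    (g : LinearMap.BilinForm ℝ V) (hg : ∀ x y : V, g x y = g y x)
    (H H₀ : ℝ) (hH : 0 ≤ H) (hH₀ : 0 ≤ H₀)
    (hcomp : ∀ x : V, H₀ ^ 2 * ⟪x, x⟫ ≤ H ^ 2 * g x x)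
    (τ ν : V) (hττ : g τ τ = 1) (hνν : g ν ν = 1) (hτν : g τ ν = 0)
    (τb νb : V) (hτbτb : ⟪τb, τb⟫ = 1) (hνbνb : ⟪νb, νb⟫ = 1)
    (hτbνb : ⟪τb, νb⟫ = 0)
    (A B : ℝ) (hwc : 0 ≤ (H₀ - B) * B - A ^ 2) :
    A * ⟪τ, νb⟫ + (H₀ - B) * ⟪τ, τb⟫ ≤ H - (A * ⟪ν, τb⟫ + B * ⟪ν, νb⟫) := by
  have hνbτb : ⟪νb, τb⟫ = 0 := by rw [real_inner_comm]; exact hτbνb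
  have key : ∀ a b : ℝ,
      H₀ * (a^2 * ⟪τ, τb⟫ + a*b * ⟪τ, νb⟫ + a*b * ⟪ν, τb⟫ + b^2 * ⟪ν, νb⟫)
        ≤ H * (a^2 + b^2) := by
    intro a b
    have hgx : g (a • τ + b • ν) (a • τ + b • ν) = a^2 + b^2 := by
      simp only [map_add, map_smul, LinearMap.add_apply, LinearMap.smul_apply,
        smul_eq_mul, hττ, hνν, hτν, hg ν τ]
      ring
    have hcx := hcomp (a • τ + b • ν)
    rw [hgx] at hcx
    have hyy : ⟪a • τb + b • νb, a • τb + b • νb⟫ = a^2 + b^2 := by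
      simp only [inner_add_left, inner_add_right, real_inner_smul_left,
        real_inner_smul_right, hτbτb, hνbνb, hτbνb, hνbτb]
      ring
    have hxy : ⟪a • τ + b • ν, a • τb + b • νb⟫
        = a^2 * ⟪τ, τb⟫ + a*b * ⟪τ, νb⟫ + a*b * ⟪ν, τb⟫ + b^2 * ⟪ν, νb⟫ := by
      simp only [inner_add_left, inner_add_right, real_inner_smul_left,
        real_inner_smul_right]
      ring
    rw [← hxy]
    have hcs := real_inner_le_norm (a • τ + b • ν) (a • τb + b • νb)
    have h1 : ⟪a • τ + b • ν, a • τ + b • ν⟫ = ‖a • τ + b • ν‖^2 :=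
      real_inner_self_eq_norm_sq _
    have h2 : ⟪a • τb + b • νb, a • τb + b • νb⟫ = ‖a • τb + b • νb‖^2 :=
      real_inner_self_eq_norm_sq _
    set nx := ‖a • τ + b • ν‖ with hnx
    set ny := ‖a • τb + b • νb‖ with hny
    have hnxn : 0 ≤ nx := norm_nonneg _
    have hnyn : 0 ≤ ny := norm_nonneg _
    have hny2 : ny^2 = a^2 + b^2 := by rw [← h2, hyy]
    have hsq : (H₀ * nx)^2 ≤ (H * ny)^2 := by
      have : H₀^2 * nx^2 ≤ H^2 * ny^2 := by rw [← h1, hny2]; exact hcx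
      nlinarith [this]
    have hle : H₀ * nx ≤ H * ny := by
      have := Real.sqrt_le_sqrt hsq
      rwa [Real.sqrt_sq (mul_nonneg hH₀ hnxn), Real.sqrt_sq (mul_nonneg hH hnyn)] at this
    calc H₀ * ⟪a • τ + b • ν, a • τb + b • νb⟫
        ≤ H₀ * (nx * ny) := mul_le_mul_of_nonneg_left hcs hH₀
      _ = (H₀ * nx) * ny := by ring
      _ ≤ (H * ny) * ny := mul_le_mul_of_nonneg_right hle hnyn
      _ = H * ny^2 := by ring
      _ = H * (a^2 + b^2) := by rw [hny2]
  rcases eq_or_lt_of_le hH₀ with h0 | h0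
  · rw [← h0] at hwc
    have hA2 : A ^ 2 ≤ 0 := by nlinarith [sq_nonneg B]
    have hA : A = 0 := pow_eq_zero_iff two_ne_zero |>.mp (le_antisymm hA2 (sq_nonneg A))
    have hB2 : B ^ 2 ≤ 0 := by nlinarith [sq_nonneg A]
    have hB : B = 0 := pow_eq_zero_iff two_ne_zero |>.mp (le_antisymm hB2 (sq_nonneg B))
    rw [hA, hB, ← h0]
    simpa using hH
  · by_cases hB : H₀ ≤ B
    · have hA2 : A ^ 2 ≤ 0 := by nlinarith
      have hA0 : A = 0 := pow_eq_zero_iff two_ne_zero |>.mp (le_antisymm hA2 (sq_nonneg A))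
      have hBH : H₀ = B := le_antisymm hB (by nlinarith)
      have hk := key 0 1
      rw [hA0, ← hBH]
      nlinarith [hk, h0]
    · push_neg at hB
      have hp : 0 < H₀ - B := by linarith
      have hq : 0 ≤ B - A^2/(H₀-B) := by
        rw [sub_nonneg, div_le_iff₀ hp]; nlinarith
      have hs2 : Real.sqrt (H₀-B) ^ 2 = H₀ - B := Real.sq_sqrt hp.le
      have hsne : Real.sqrt (H₀-B) ≠ 0 := ne_of_gt (Real.sqrt_pos.mpr hp)
      have h1 := key (Real.sqrt (H₀-B)) (A / Real.sqrt (H₀-B))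
      have e1 : Real.sqrt (H₀-B) * (A / Real.sqrt (H₀-B)) = A := by field_simp
      have e2 : (A / Real.sqrt (H₀-B))^2 = A^2/(H₀-B) := by rw [div_pow, hs2]
      rw [hs2, e1, e2] at h1
      have h2 := key 0 (Real.sqrt (B - A^2/(H₀-B)))
      rw [Real.sq_sqrt hq] at h2
      have hsum := add_le_add h1 h2
      ring_nf at hsum
      nlinarith [hsum, h0]
end

section
/- Let V be a real inner product space with inner product ⟪·,·⟫ and let g be a symmetric bilinear form on V. Let H ≥ 0 and H₀ > 0 be real numbers such that H²·g(x,x) ≥ H₀²·⟪x,x⟫ for all x ∈ V. Let τ, ν ∈ V satisfy g(τ,τ) = g(ν,ν) = 1 and g(τ,ν) = 0, and let τ̄, ν̄ ∈ V be orthonormal for ⟪·,·⟫. Let A, B be real numbers with B = H₀ and (H₀ − B)·B − A² ≥ 0. Then A = 0; and if moreover equality holds in the comparison, i.e. H − (A·⟪ν, τ̄⟫ + B·⟪ν, ν̄⟫) = A·⟪τ, ν̄⟫ + (H₀ − B)·⟪τ, τ̄⟫, then ⟪ν, ν̄⟫ = ‖ν‖, H = H₀·‖ν‖, and ν = ‖ν‖·ν̄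 (i.e. ν is parallel to ν̄). -/
open RealInnerProductSpace

/-- Second equality case (`H₀ ≠ 0`, `H₀ − ∇_ν̄ρ̄ = 0`) in the rigidity discussion of
Lemma 3.2: then `∇_τ̄ρ̄ = 0`, and equality in the comparison forces `ν ∥ ν̄`
and `H = H₀‖ν‖`. -/
theorem rigidity_case_B_eq_H0
    {V : Type*} [NormedAddCommGroup V] [InnerProductSpace ℝ V]
    (g : LinearMap.BilinForm ℝ V) (hg : ∀ x y : V, g x y = g y x)
    (H H₀ : ℝ) (hH : 0 ≤ H) (hH₀ : 0 < H₀)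
    (hcomp : ∀ x : V, H₀ ^ 2 * ⟪x, x⟫ ≤ H ^ 2 * g x x)
    (τ ν : V) (hττ : g τ τ = 1) (hνν : g ν ν = 1) (hτν : g τ ν = 0)
    (τb νb : V) (hτbτb : ⟪τb, τb⟫ = 1) (hνbνb : ⟪νb, νb⟫ = 1)
    (hτbνb : ⟪τb, νb⟫ = 0)
    (A B : ℝ) (hB : B = H₀) (hwc : 0 ≤ (H₀ - B) * B - A ^ 2) :
    A = 0 ∧
      (H - (A * ⟪ν, τb⟫ + B * ⟪ν, νb⟫) = A * ⟪τ, νb⟫ + (H₀ - B) * ⟪τ, τb⟫ →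
        ⟪ν, νb⟫ = ‖ν‖ ∧ H = H₀ * ‖ν‖ ∧ ν = ‖ν‖ • νb) := by
  have hA : A = 0 := by nlinarith [sq_nonneg A]
  refine ⟨hA, fun heq => ?_⟩
  have hHeq : H = H₀ * ⟪ν, νb⟫ := by
    rw [hA, hB] at heq; linarith
  have hnνb : ‖νb‖ = 1 := by
    have := real_inner_self_eq_norm_sq νb
    nlinarith [norm_nonneg νb]
  have hcs : ⟪ν, νb⟫ ≤ ‖ν‖ := by
    have := real_inner_le_norm ν νb
    rwa [hnνb, mul_one] at this
  have hlow : H₀ * ‖ν‖ ≤ H := by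
    have h1 := hcomp ν
    rw [hνν, real_inner_self_eq_norm_sq] at h1
    nlinarith [norm_nonneg ν, mul_nonneg hH₀.le (norm_nonneg ν)]
  have h2 : H₀ * ⟪ν, νb⟫ ≤ H₀ * ‖ν‖ := by
    exact mul_le_mul_of_nonneg_left hcs hH₀.le
  have hinner : ⟪ν, νb⟫ = ‖ν‖ := by nlinarith
  refine ⟨hinner, by rw [hHeq, hinner], ?_⟩
  have : ⟪ν, νb⟫ = ‖ν‖ * ‖νb‖ := by rw [hnνb, mul_one, hinner]
  have hsmul := (inner_eq_norm_mul_iff_real).mp this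
  rwa [hnνb, one_smul] at hsmul
end

section
/- Let a₁₁, a₂₂, a³³, c₁₁, c₂₂ be positive real numbers with a₁₁ > a₂₂, and let c₁₂ be a real number with c₁₁·c₂₂ > c₁₂². Set B = √(a³³·((√a₁₁·c₂₂ + √a₂₂·c₁₁)² + (√a₁₁ − √a₂₂)²·c₁₂²)). Then (c₁₁ + c₂₂)/√a₂₂ > B/√(a₁₁·a₂₂·a³³); consequently 2·((c₁₁ + c₂₂)/√a₂₂ − B/√(a₁₁·a₂₂·a³³)) > 0. -/
open Real

/-- Proposition 5.11 (algebraic form): positivity of the limit mean curvature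
`H_{p₊} ≥ 2((c₁₁+c₂₂)/√a₂₂ − B/√(a₁₁a₂₂a³³))` when `a₁₁ > a₂₂` at a strictly
convex boundary point. -/
theorem positive_mean_curvature_limit
    (a11 a22 a33 c11 c22 : ℝ) (ha11 : 0 < a11) (ha22 : 0 < a22) (ha33 : 0 < a33)
    (hc11 : 0 < c11) (hc22 : 0 < c22) (hlt : a22 < a11)
    (c12 : ℝ) (hconv : c12 ^ 2 < c11 * c22)
    (B : ℝ)
    (hB : B = Real.sqrt (a33 * ((Real.sqrt a11 * c22 + Real.sqrt a22 * c11) ^ 2 +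
      (Real.sqrt a11 - Real.sqrt a22) ^ 2 * c12 ^ 2))) :
    B / Real.sqrt (a11 * a22 * a33) < (c11 + c22) / Real.sqrt a22 ∧
      0 < 2 * ((c11 + c22) / Real.sqrt a22 - B / Real.sqrt (a11 * a22 * a33)) := by
  set s := Real.sqrt a11 with hs'
  set t := Real.sqrt a22 with ht'
  set u := Real.sqrt a33 with hu'
  have hs : 0 < s := Real.sqrt_pos.mpr ha11
  have ht : 0 < t := Real.sqrt_pos.mpr ha22
  have hu : 0 < u := Real.sqrt_pos.mpr ha33
  have hts : t < s := Real.sqrt_lt_sqrt ha22.le hlt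
  set E : ℝ := (s * c22 + t * c11) ^ 2 + (s - t) ^ 2 * c12 ^ 2 with hE'
  have hEnn : 0 ≤ E := by positivity
  have hdenom : Real.sqrt (a11 * a22 * a33) = s * t * u := by
    rw [Real.sqrt_mul (by positivity), Real.sqrt_mul ha11.le]
  have hBu : B = u * Real.sqrt E := by
    rw [hB, Real.sqrt_mul ha33.le, mul_comm u]

  have hsqE : Real.sqrt E < s * (c11 + c22) := by
    rw [Real.sqrt_lt' (by positivity)]
    have h1 : (s - t) ^ 2 * c12 ^ 2 < (s - t) ^ 2 * (c11 * c22) := by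
      have : 0 < (s - t) ^ 2 := pow_pos (sub_pos.mpr hts) 2
      exact (mul_lt_mul_iff_right₀ this).mpr hconv
    nlinarith [mul_pos hc11 hc22, mul_pos hs hc11, mul_pos ht hc11,
      mul_pos hs hc22, mul_pos (sub_pos.mpr hts) hc22,
      mul_pos (mul_pos (sub_pos.mpr hts) hc11) (mul_pos hs hc22),
      mul_pos (mul_pos (sub_pos.mpr hts) hc11) (mul_pos hs hc11),
      mul_pos (mul_pos (sub_pos.mpr hts) hc11) (mul_pos ht hc11)]
  have key : B / Real.sqrt (a11 * a22 * a33) < (c11 + c22) / t := by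
    rw [hdenom, div_lt_div_iff₀ (by positivity) ht, hBu]
    calc u * Real.sqrt E * t < u * (s * (c11 + c22)) * t := by
          have := mul_lt_mul_of_pos_left hsqE hu
          exact mul_lt_mul_of_pos_right this ht
      _ = (c11 + c22) * (s * t * u) := by ring
  exact ⟨key, by linarith⟩
end

section
/- Let a₁₁, a₂₂, a³³, c₁₁, c₂₂ be positive real numbers and c₁₂ a real number. Define B = √(a³³·((√a₁₁·c₂₂ + √a₂₂·c₁₁)² + (√a₁₁ − √a₂₂)²·c₁₂²)), b₁₁ = a³³·B⁻¹·c₁₁⁻¹·(a₁₁·(c₁₁·c₂₂ − c₁₂²) + √(a₁₁·a₂₂)·(c₁₁² + c₁₂²)), and b₁₂ = a³³·B⁻¹·√(a₁₁·a₂₂)·(c₁₁ + c₂₂). Then b₁₁²·c₁₁²/(a₁₁·a³³) + b₁₂²·c₁₂²/(a₂₂·a³³) = c₁₁² + c₁₂²; equivalently, for every real s, c₁₁² + c₁₂² − (1+s)²·(b₁₁²·c₁₁²/(a₁₁·a³³) + b₁₂²·c₁₂²/(a₂₂·a³³)) = −(2s + s²)·(c₁₁² + c₁₂²). -/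
lemma contact_angle_aux (α β a33 c11 c22 c12 B : ℝ)
    (hα : 0 < α) (hβ : 0 < β) (ha33 : 0 < a33) (hc11 : 0 < c11) (hc22 : 0 < c22)
    (hB2 : B ^ 2 = a33 * ((α * c22 + β * c11) ^ 2 + (α - β) ^ 2 * c12 ^ 2))
    (hBpos : 0 < B) :
    (a33 * B⁻¹ * c11⁻¹ * (α ^ 2 * (c11 * c22 - c12 ^ 2) + α * β * (c11 ^ 2 + c12 ^ 2))) ^ 2
        * c11 ^ 2 / (α ^ 2 * a33)
      + (a33 * B⁻¹ * (α * β) * (c11 + c22)) ^ 2 * c12 ^ 2 / (β ^ 2 * a33)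
      = c11 ^ 2 + c12 ^ 2 := by
  have hBne : B ≠ 0 := hBpos.ne'
  have h1 : (a33 * B⁻¹ * c11⁻¹ * (α ^ 2 * (c11 * c22 - c12 ^ 2) + α * β * (c11 ^ 2 + c12 ^ 2))) ^ 2
        * c11 ^ 2 / (α ^ 2 * a33)
      + (a33 * B⁻¹ * (α * β) * (c11 + c22)) ^ 2 * c12 ^ 2 / (β ^ 2 * a33)
      = a33 ^ 2 * (B ^ 2)⁻¹ *
        ((α ^ 2 * (c11 * c22 - c12 ^ 2) + α * β * (c11 ^ 2 + c12 ^ 2)) ^ 2 / (α ^ 2 * a33)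
          + (α * β) ^ 2 * (c11 + c22) ^ 2 * c12 ^ 2 / (β ^ 2 * a33)) := by
    field_simp
  rw [h1, hB2]
  have hQne : (α * c22 + β * c11) ^ 2 + (α - β) ^ 2 * c12 ^ 2 ≠ 0 := by
    have : 0 < (α * c22 + β * c11) ^ 2 := by positivity
    nlinarith [sq_nonneg ((α - β) * c12)]
  field_simp
  ring

/-- The exact computation ("cal1stterm") from the proof of Proposition 5.6
(`cadifference`): the `x₁²`-coefficient identity of the contact-angle difference. -/
theorem contact_angle_first_term
    (a11 a22 a33 c11 c22 : ℝ) (ha11 : 0 < a11) (ha22 : 0 < a22) (ha33 : 0 < a33)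
    (hc11 : 0 < c11) (hc22 : 0 < c22) (c12 : ℝ)
    (B b11 b12 : ℝ)
    (hB : B = Real.sqrt (a33 * ((Real.sqrt a11 * c22 + Real.sqrt a22 * c11) ^ 2 +
      (Real.sqrt a11 - Real.sqrt a22) ^ 2 * c12 ^ 2)))
    (hb11 : b11 = a33 * B⁻¹ * c11⁻¹ * (a11 * (c11 * c22 - c12 ^ 2) +
      Real.sqrt (a11 * a22) * (c11 ^ 2 + c12 ^ 2)))
    (hb12 : b12 = a33 * B⁻¹ * Real.sqrt (a11 * a22) * (c11 + c22)) :
    b11 ^ 2 * c11 ^ 2 / (a11 * a33) + b12 ^ 2 * c12 ^ 2 / (a22 * a33) =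
        c11 ^ 2 + c12 ^ 2 ∧
      ∀ s : ℝ,
        c11 ^ 2 + c12 ^ 2 - (1 + s) ^ 2 *
            (b11 ^ 2 * c11 ^ 2 / (a11 * a33) + b12 ^ 2 * c12 ^ 2 / (a22 * a33)) =
          -(2 * s + s ^ 2) * (c11 ^ 2 + c12 ^ 2) := by
  set α := Real.sqrt a11 with hαdef
  set β := Real.sqrt a22 with hβdef
  have hα : 0 < α := Real.sqrt_pos.mpr ha11
  have hβ : 0 < β := Real.sqrt_pos.mpr ha22
  have hα2 : α ^ 2 = a11 := Real.sq_sqrt ha11.le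
  have hβ2 : β ^ 2 = a22 := Real.sq_sqrt ha22.le
  have hab : Real.sqrt (a11 * a22) = α * β := Real.sqrt_mul ha11.le a22
  have hQpos : 0 < a33 * ((α * c22 + β * c11) ^ 2 + (α - β) ^ 2 * c12 ^ 2) := by
    apply mul_pos ha33
    have h1 : 0 < (α * c22 + β * c11) ^ 2 := by positivity
    nlinarith [sq_nonneg ((α - β) * c12)]
  have hBpos : 0 < B := hB ▸ Real.sqrt_pos.mpr hQpos
  have hB2 : B ^ 2 = a33 * ((α * c22 + β * c11) ^ 2 + (α - β) ^ 2 * c12 ^ 2) := by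
    rw [hB, Real.sq_sqrt hQpos.le]
  have key : b11 ^ 2 * c11 ^ 2 / (a11 * a33) + b12 ^ 2 * c12 ^ 2 / (a22 * a33) =
      c11 ^ 2 + c12 ^ 2 := by
    rw [hb11, hb12, hab, ← hα2, ← hβ2]
    have := contact_angle_aux α β a33 c11 c22 c12 B hα hβ ha33 hc11 hc22 hB2 hBpos
    linear_combination this
  exact ⟨key, fun s => by rw [key]; ring⟩
end

section
/- Let a₁₁, a₂₂, a³³, c₁₁, c₂₂ be positive real numbers and c₁₂ a real number. Define B = √(a³³·((√a₁₁·c₂₂ + √a₂₂·c₁₁)² + (√a₁₁ − √a₂₂)²·c₁₂²)), b₁₂ = a³³·B⁻¹·√(a₁₁·a₂₂)·(c₁₁ + c₂₂), and b₂₂ = a³³·B⁻¹·c₂₂⁻¹·(a₂₂·(c₁₁·c₂₂ − c₁₂²) + √(a₁₁·a₂₂)·(c₁₂² + c₂₂²)). Then b₁₂²·c₁₂²/(a₁₁·a³³) + b₂₂²·c₂₂²/(a₂₂·a³³) = c₁₂² + c₂₂². -/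
/-- The exact computation ("cal2ndterm") from the proof of Proposition 5.6
(`cadifference`): the `x₂²`-coefficient identity of the contact-angle difference. -/
theorem contact_angle_second_term
    (a11 a22 a33 c11 c22 : ℝ) (ha11 : 0 < a11) (ha22 : 0 < a22) (ha33 : 0 < a33)
    (hc11 : 0 < c11) (hc22 : 0 < c22) (c12 : ℝ)
    (B b12 b22 : ℝ)
    (hB : B = Real.sqrt (a33 * ((Real.sqrt a11 * c22 + Real.sqrt a22 * c11) ^ 2 +
      (Real.sqrt a11 - Real.sqrt a22) ^ 2 * c12 ^ 2)))
    (hb12 : b12 = a33 * B⁻¹ * Real.sqrt (a11 * a22) * (c11 + c22))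
    (hb22 : b22 = a33 * B⁻¹ * c22⁻¹ * (a22 * (c11 * c22 - c12 ^ 2) +
      Real.sqrt (a11 * a22) * (c12 ^ 2 + c22 ^ 2))) :
    b12 ^ 2 * c12 ^ 2 / (a11 * a33) + b22 ^ 2 * c22 ^ 2 / (a22 * a33) =
      c12 ^ 2 + c22 ^ 2 := by
  set s := Real.sqrt a11 with hsdef
  set t := Real.sqrt a22 with htdef
  have hs : s ^ 2 = a11 := Real.sq_sqrt ha11.le
  have ht : t ^ 2 = a22 := Real.sq_sqrt ha22.le
  have hspos : 0 < s := Real.sqrt_pos.mpr ha11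
  have htpos : 0 < t := Real.sqrt_pos.mpr ha22
  have hst : Real.sqrt (a11 * a22) = s * t := Real.sqrt_mul ha11.le a22
  have hinner : 0 < (s * c22 + t * c11) ^ 2 + (s - t) ^ 2 * c12 ^ 2 := by
    have h1 : 0 < s * c22 + t * c11 := by positivity
    nlinarith [sq_nonneg (s - t), sq_nonneg c12]
  have hBpos : 0 < B := by
    rw [hB]
    exact Real.sqrt_pos.mpr (by positivity)
  have hB2 : B ^ 2 = a33 * ((s * c22 + t * c11) ^ 2 + (s - t) ^ 2 * c12 ^ 2) := by
    rw [hB, Real.sq_sqrt (by positivity)]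
  have hBne : B ≠ 0 := hBpos.ne'
  have h12 : b12 ^ 2 = a33 ^ 2 * (B ^ 2)⁻¹ * (s * t) ^ 2 * (c11 + c22) ^ 2 := by
    rw [hb12, hst]; field_simp
  have h22 : b22 ^ 2 = a33 ^ 2 * (B ^ 2)⁻¹ * (c22 ^ 2)⁻¹ *
      (a22 * (c11 * c22 - c12 ^ 2) + s * t * (c12 ^ 2 + c22 ^ 2)) ^ 2 := by
    rw [hb22, hst]; field_simp
  rw [h12, h22, hB2, ← hs, ← ht]
  have h1 : s * c22 + t * c11 ≠ 0 := by positivity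
  field_simp
  ring
end

section
/- Let a₁₁, a₂₂, a³³, c₁₁, c₂₂ be positive real numbers and c₁₂ a real number. Define B = √(a³³·((√a₁₁·c₂₂ + √a₂₂·c₁₁)² + (√a₁₁ − √a₂₂)²·c₁₂²)), b₁₁ = a³³·B⁻¹·c₁₁⁻¹·(a₁₁·(c₁₁·c₂₂ − c₁₂²) + √(a₁₁·a₂₂)·(c₁₁² + c₁₂²)), b₁₂ = a³³·B⁻¹·√(a₁₁·a₂₂)·(c₁₁ + c₂₂), and b₂₂ = a³³·B⁻¹·c₂₂⁻¹·(a₂₂·(c₁₁·c₂₂ − c₁₂²) + √(a₁₁·a₂₂)·(c₁₂² + c₂₂²)). Then b₁₁·b₁₂·c₁₁·c₁₂/(a₁₁·a³³) + b₁₂·b₂₂·c₁₂·c₂₂/(a₂₂·a³³) = c₁₂·(c₁₁ + c₂₂). -/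
/-!
Write `s₁ = √a₁₁`, `s₂ = √a₂₂`, `P = s₁c₂₂ + s₂c₁₁` and `Q = s₁ − s₂`, so that
`B² = a³³(P² + Q²c₁₂²)`. The coefficients factor as `c₁₁b₁₁ = a³³B⁻¹s₁(c₁₁P − Qc₁₂²)`,
`c₂₂b₂₂ = a³³B⁻¹s₂(c₂₂P + Qc₁₂²)` and `b₁₂ = a³³B⁻¹s₁s₂(c₁₁ + c₂₂)`. The left side is then
`c₁₂(c₁₁ + c₂₂)a³³B⁻²` times `s₂(c₁₁P − Qc₁₂²) + s₁(c₂₂P + Qc₁₂²) = P² + Q²c₁₂²`,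
which is `B²/a³³`.
-/

section Field

variable {K : Type*} [Field K] {a11 a22 a33 c11 c12 c22 s1 s2 r B : K}

theorem mul_weighted_coeff_eq (hc : c11 ≠ 0) (hs1 : s1 ^ 2 = a11) (hr : r = s1 * s2) :
    c11 * (a33 * B⁻¹ * c11⁻¹ * (a11 * (c11 * c22 - c12 ^ 2) + r * (c11 ^ 2 + c12 ^ 2))) =
      a33 * B⁻¹ * s1 * (c11 * (s1 * c22 + s2 * c11) - (s1 - s2) * c12 ^ 2) := by
  subst hs1 hr
  field_simp
  ring

theorem cross_term_eq_of_factorization {b11 b12 b22 : K}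
    (hs1 : s1 ^ 2 = a11) (hs2 : s2 ^ 2 = a22) (hs1₀ : s1 ≠ 0) (hs2₀ : s2 ≠ 0)
    (ha33 : a33 ≠ 0) (hB₀ : B ≠ 0)
    (hB : B ^ 2 = a33 * ((s1 * c22 + s2 * c11) ^ 2 + (s1 - s2) ^ 2 * c12 ^ 2))
    (hb11 : c11 * b11 = a33 * B⁻¹ * s1 * (c11 * (s1 * c22 + s2 * c11) - (s1 - s2) * c12 ^ 2))
    (hb12 : b12 = a33 * B⁻¹ * (s1 * s2) * (c11 + c22))
    (hb22 : c22 * b22 = a33 * B⁻¹ * s2 * (c22 * (s2 * c11 + s1 * c22) - (s2 - s1) * c12 ^ 2)) :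
    b11 * b12 * c11 * c12 / (a11 * a33) + b12 * b22 * c12 * c22 / (a22 * a33) =
      c12 * (c11 + c22) := by
  subst hs1 hs2
  calc b11 * b12 * c11 * c12 / (s1 ^ 2 * a33) + b12 * b22 * c12 * c22 / (s2 ^ 2 * a33)
      = b12 * c12 / a33 * (c11 * b11 / s1 ^ 2 + c22 * b22 / s2 ^ 2) := by ring
    _ = c12 * (c11 + c22) * a33 / B ^ 2 *
          (s2 * (c11 * (s1 * c22 + s2 * c11) - (s1 - s2) * c12 ^ 2) +
            s1 * (c22 * (s2 * c11 + s1 * c22) - (s2 - s1) * c12 ^ 2)) := by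
      rw [hb11, hb12, hb22]
      field_simp
    _ = c12 * (c11 + c22) *
          (a33 * ((s1 * c22 + s2 * c11) ^ 2 + (s1 - s2) ^ 2 * c12 ^ 2)) / B ^ 2 := by
      ring
    _ = c12 * (c11 + c22) := by
      rw [← hB]
      field_simp

end Field

/-- The exact computation ("cal3rdterm") from the proof of Proposition 5.6
(`cadifference`): the `x₁x₂`-coefficient identity of the contact-angle difference. -/
theorem contact_angle_cross_term
    (a11 a22 a33 c11 c22 : ℝ) (ha11 : 0 < a11) (ha22 : 0 < a22) (ha33 : 0 < a33)
    (hc11 : 0 < c11) (hc22 : 0 < c22) (c12 : ℝ)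
    (B b11 b12 b22 : ℝ)
    (hB : B = Real.sqrt (a33 * ((Real.sqrt a11 * c22 + Real.sqrt a22 * c11) ^ 2 +
      (Real.sqrt a11 - Real.sqrt a22) ^ 2 * c12 ^ 2)))
    (hb11 : b11 = a33 * B⁻¹ * c11⁻¹ * (a11 * (c11 * c22 - c12 ^ 2) +
      Real.sqrt (a11 * a22) * (c11 ^ 2 + c12 ^ 2)))
    (hb12 : b12 = a33 * B⁻¹ * Real.sqrt (a11 * a22) * (c11 + c22))
    (hb22 : b22 = a33 * B⁻¹ * c22⁻¹ * (a22 * (c11 * c22 - c12 ^ 2) +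
      Real.sqrt (a11 * a22) * (c12 ^ 2 + c22 ^ 2))) :
    b11 * b12 * c11 * c12 / (a11 * a33) + b12 * b22 * c12 * c22 / (a22 * a33) =
      c12 * (c11 + c22) := by
  have hs1 : √a11 ^ 2 = a11 := Real.sq_sqrt ha11.le
  have hs2 : √a22 ^ 2 = a22 := Real.sq_sqrt ha22.le
  have hr : √(a11 * a22) = √a11 * √a22 := Real.sqrt_mul ha11.le a22
  have hradicand :
      0 < a33 * ((√a11 * c22 + √a22 * c11) ^ 2 + (√a11 - √a22) ^ 2 * c12 ^ 2) := by
    positivity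
  have hB₀ : B ≠ 0 := hB ▸ (Real.sqrt_pos.2 hradicand).ne'
  have hB2 := hB ▸ Real.sq_sqrt hradicand.le
  -- `b₂₂` is `b₁₁` with the indices 1 and 2 exchanged.
  have hc22b22 := hb22 ▸ mul_comm c11 c22 ▸ add_comm (c22 ^ 2) (c12 ^ 2) ▸
    mul_weighted_coeff_eq hc22.ne' hs2 (hr.trans (mul_comm _ _))
  exact cross_term_eq_of_factorization hs1 hs2 (by positivity) (by positivity) ha33.ne' hB₀
    hB2 (hb11 ▸ mul_weighted_coeff_eq hc11.ne' hs1 hr) (hr ▸ hb12) hc22b22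
end

section
/- Let a₁₁, a₂₂, a³³, c₁₁, c₂₂ be positive real numbers and c₁₂ a real number. Define B = √(a³³·((√a₁₁·c₂₂ + √a₂₂·c₁₁)² + (√a₁₁ − √a₂₂)²·c₁₂²)), b₁₁ = a³³·B⁻¹·c₁₁⁻¹·(a₁₁·(c₁₁·c₂₂ − c₁₂²) + √(a₁₁·a₂₂)·(c₁₁² + c₁₂²)), b₁₂ = a³³·B⁻¹·√(a₁₁·a₂₂)·(c₁₁ + c₂₂), and b₂₂ = a³³·B⁻¹·c₂₂⁻¹·(a₂₂·(c₁₁·c₂₂ − c₁₂²) + √(a₁₁·a₂₂)·(c₁₂² + c₂₂²)). Then for all real numbers x₁, x₂: (x₁·c₁₁·b₁₁ + x₂·c₁₂·b₁₂)²/(a₁₁·a³³) + (x₁·c₁₂·b₁₂ + x₂·c₂₂·b₂₂)²/(a₂₂·a³³) = (c₁₁² + c₁₂²)·x₁² + 2·c₁₂·(c₁₁ + c₂₂)·x₁·x₂ + (c₁₂² + c₂₂²)·x₂². -/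
/-- The sum-of-squares identity ("squareangle") from the proof of Proposition 5.6
(`cadifference`), rewriting the quadratic form that governs the contact-angle
difference. -/
theorem contact_angle_sum_of_squares
    (a11 a22 a33 c11 c22 : ℝ) (ha11 : 0 < a11) (ha22 : 0 < a22) (ha33 : 0 < a33)
    (hc11 : 0 < c11) (hc22 : 0 < c22) (c12 : ℝ)
    (B b11 b12 b22 : ℝ)
    (hB : B = Real.sqrt (a33 * ((Real.sqrt a11 * c22 + Real.sqrt a22 * c11) ^ 2 +
      (Real.sqrt a11 - Real.sqrt a22) ^ 2 * c12 ^ 2)))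
    (hb11 : b11 = a33 * B⁻¹ * c11⁻¹ * (a11 * (c11 * c22 - c12 ^ 2) +
      Real.sqrt (a11 * a22) * (c11 ^ 2 + c12 ^ 2)))
    (hb12 : b12 = a33 * B⁻¹ * Real.sqrt (a11 * a22) * (c11 + c22))
    (hb22 : b22 = a33 * B⁻¹ * c22⁻¹ * (a22 * (c11 * c22 - c12 ^ 2) +
      Real.sqrt (a11 * a22) * (c12 ^ 2 + c22 ^ 2))) :
    ∀ x1 x2 : ℝ,
      (x1 * c11 * b11 + x2 * c12 * b12) ^ 2 / (a11 * a33) +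
          (x1 * c12 * b12 + x2 * c22 * b22) ^ 2 / (a22 * a33) =
        (c11 ^ 2 + c12 ^ 2) * x1 ^ 2 + 2 * c12 * (c11 + c22) * x1 * x2 +
          (c12 ^ 2 + c22 ^ 2) * x2 ^ 2 := by
  intro x1 x2
  set p := Real.sqrt a11 with hp
  set q := Real.sqrt a22 with hq
  have hp0 : 0 < p := Real.sqrt_pos.mpr ha11
  have hq0 : 0 < q := Real.sqrt_pos.mpr ha22
  have hp2 : p ^ 2 = a11 := Real.sq_sqrt ha11.le
  have hq2 : q ^ 2 = a22 := Real.sq_sqrt ha22.le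
  have hpq : Real.sqrt (a11 * a22) = p * q := Real.sqrt_mul ha11.le a22
  set D := (p * c22 + q * c11) ^ 2 + (p - q) ^ 2 * c12 ^ 2 with hD
  have hD0 : 0 < D := by
    have h1 : 0 < (p * c22 + q * c11) ^ 2 := by positivity
    have h2 : 0 ≤ (p - q) ^ 2 * c12 ^ 2 := by positivity
    linarith
  have hB2 : B ^ 2 = a33 * D := by
    rw [hB]
    exact Real.sq_sqrt (by positivity)
  have hB0 : 0 < B := by
    rw [hB]
    exact Real.sqrt_pos.mpr (by positivity)
  have hBinv : (B⁻¹) ^ 2 = (a33 * D)⁻¹ := by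
    rw [inv_pow, hB2]
  set W1 := x1 * (p ^ 2 * (c11 * c22 - c12 ^ 2) + p * q * (c11 ^ 2 + c12 ^ 2)) +
      x2 * c12 * (p * q * (c11 + c22)) with hW1
  set W2 := x1 * c12 * (p * q * (c11 + c22)) +
      x2 * (q ^ 2 * (c11 * c22 - c12 ^ 2) + p * q * (c12 ^ 2 + c22 ^ 2)) with hW2
  have e1 : x1 * c11 * b11 + x2 * c12 * b12 = a33 * B⁻¹ * W1 := by
    rw [hb11, hb12, hpq, ← hp2, hW1]
    field_simp
  have e2 : x1 * c12 * b12 + x2 * c22 * b22 = a33 * B⁻¹ * W2 := by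
    rw [hb22, hb12, hpq, ← hq2, hW2]
    field_simp
  have key : ∀ W : ℝ, (a33 * B⁻¹ * W) ^ 2 = a33 / D * W ^ 2 := by
    intro W
    rw [mul_pow, mul_pow, hBinv]
    field_simp
  rw [e1, e2, key W1, key W2, ← hp2, ← hq2, hW1, hW2]
  field_simp
  ring
end

section
/- Let ε > 0 and let H, Γ, a : ℝ → ℝ be continuous on the interval (−ε, ε) with a(t) > 0 for all t ∈ (−ε, ε). Let F : ℝ → ℝ satisfy F'(t) = a(t)·H(t) for every t ∈ (−ε, ε) (in the sense of hasDerivAt). Suppose the function t ↦ exp(−∫₀ᵗ Γ(s) ds)·H(t) is nonincreasing on (−ε, ε), and suppose F(0) ≤ F(t) for all t ∈ (−ε, ε). Then H(t) = 0 for all t ∈ (−ε, ε). -/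
open Set

/-- The analytic content of Corollary 4.3: if the capillary energy `F` has derivative
`F'(t) = a(t)H(t)` with `a > 0`, the weighted mean curvature
`t ↦ exp(−∫₀ᵗ Γ(s) ds)·H(t)` is nonincreasing (the local splitting theorem),
and `F` attains its minimum over `(−ε, ε)` at `0`, then `H ≡ 0` on `(−ε, ε)`. -/
theorem foliation_leaves_minimal
    (ε : ℝ) (hε : 0 < ε) (H Γ a : ℝ → ℝ)
    (hH : ContinuousOn H (Ioo (-ε) ε))
    (hΓ : ContinuousOn Γ (Ioo (-ε) ε))
    (ha : ContinuousOn a (Ioo (-ε) ε))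
    (hapos : ∀ t ∈ Ioo (-ε) ε, 0 < a t)
    (F : ℝ → ℝ)
    (hF : ∀ t ∈ Ioo (-ε) ε, HasDerivAt F (a t * H t) t)
    (hmono : AntitoneOn (fun t => Real.exp (-∫ s in (0:ℝ)..t, Γ s) * H t) (Ioo (-ε) ε))
    (hmin : ∀ t ∈ Ioo (-ε) ε, F 0 ≤ F t) :
    ∀ t ∈ Ioo (-ε) ε, H t = 0 := by
  have h0 : (0 : ℝ) ∈ Ioo (-ε) ε := ⟨neg_lt_zero.2 hε, hε⟩
  -- H 0 = 0 by the first-order condition at the interior minimum 0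
  have hloc : IsLocalMin F 0 :=
    Filter.eventually_of_mem (Ioo_mem_nhds h0.1 h0.2) hmin
  have hd0 : a 0 * H 0 = 0 := hloc.hasDerivAt_eq_zero (hF 0 h0)
  have hH0 : H 0 = 0 := by
    rcases mul_eq_zero.1 hd0 with h | h
    · exact absurd h (ne_of_gt (hapos 0 h0))
    · exact h
  -- sign of H on each side of 0
  have hsignpos : ∀ t ∈ Ioo (-ε) ε, 0 ≤ t → H t ≤ 0 := by
    intro t ht ht0
    have hw := hmono h0 ht ht0
    simp only [hH0, mul_zero] at hw
    have he := Real.exp_pos (-∫ s in (0:ℝ)..t, Γ s)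
    nlinarith
  have hsignneg : ∀ t ∈ Ioo (-ε) ε, t ≤ 0 → 0 ≤ H t := by
    intro t ht ht0
    have hw := hmono ht h0 ht0
    simp only [hH0, mul_zero] at hw
    have he := Real.exp_pos (-∫ s in (0:ℝ)..t, Γ s)
    nlinarith
  -- F is constant (equal to F 0) on the interval
  have hFconst : ∀ t ∈ Ioo (-ε) ε, F t = F 0 := by
    intro t ht
    rcases le_total 0 t with ht0 | ht0
    · have hsub : Icc (0:ℝ) t ⊆ Ioo (-ε) ε := fun x hx =>
        ⟨lt_of_lt_of_le h0.1 hx.1, lt_of_le_of_lt hx.2 ht.2⟩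
      have hcont : ContinuousOn F (Icc 0 t) := fun x hx =>
        ((hF x (hsub hx)).continuousAt).continuousWithinAt
      have hanti : AntitoneOn F (Icc 0 t) := by
        refine antitoneOn_of_deriv_nonpos (convex_Icc _ _) hcont (fun x hx => ?_)
          (fun x hx => ?_) <;> rw [interior_Icc] at hx <;>
          have hxm : x ∈ Ioo (-ε) ε := hsub ⟨le_of_lt hx.1, le_of_lt hx.2⟩
        · exact (hF x hxm).differentiableAt.differentiableWithinAt
        rw [(hF x hxm).deriv]
        exact mul_nonpos_of_nonneg_of_nonpos (le_of_lt (hapos x hxm))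
          (hsignpos x hxm (le_of_lt hx.1))
      exact le_antisymm (hanti (left_mem_Icc.2 ht0) (right_mem_Icc.2 ht0) ht0)
        (hmin t ht)
    · have hsub : Icc t (0:ℝ) ⊆ Ioo (-ε) ε := fun x hx =>
        ⟨lt_of_lt_of_le ht.1 hx.1, lt_of_le_of_lt hx.2 h0.2⟩
      have hcont : ContinuousOn F (Icc t 0) := fun x hx =>
        ((hF x (hsub hx)).continuousAt).continuousWithinAt
      have hmon : MonotoneOn F (Icc t 0) := by
        refine monotoneOn_of_deriv_nonneg (convex_Icc _ _) hcont (fun x hx => ?_)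
          (fun x hx => ?_) <;> rw [interior_Icc] at hx <;>
          have hxm : x ∈ Ioo (-ε) ε := hsub ⟨le_of_lt hx.1, le_of_lt hx.2⟩
        · exact (hF x hxm).differentiableAt.differentiableWithinAt
        rw [(hF x hxm).deriv]
        exact mul_nonneg (le_of_lt (hapos x hxm))
          (hsignneg x hxm (le_of_lt hx.2))
      exact le_antisymm (hmon (left_mem_Icc.2 ht0) (right_mem_Icc.2 ht0) ht0)
        (hmin t ht)
  -- hence the derivative of F vanishes, so H ≡ 0
  intro t ht
  have heq : F =ᶠ[nhds t] fun _ => F 0 :=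
    Filter.eventually_of_mem (Ioo_mem_nhds ht.1 ht.2) hFconst
  have hconstD : HasDerivAt F 0 t := by
    have : HasDerivAt (fun _ : ℝ => F 0) 0 t := hasDerivAt_const _ _
    exact this.congr_of_eventuallyEq heq
  have : a t * H t = 0 := hconstD.unique (hF t ht) ▸ rfl
  rcases mul_eq_zero.1 this with h | h
  · exact absurd h (ne_of_gt (hapos t ht))
  · exact h
end
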